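/- Let 𝒞 be an isomorphism-closed class of groups and let G be a group admitting an injective homomorphism φ : G → ∏_{n∈ℕ₊} S_n with every S_n ∈ 𝒞 and with image projecting onto each factor S_n. Then there exists a countable family of groups (T_j)_{j∈ℕ₊}, each belonging to 𝒞, and an injective homomorphism ψ : G → ∏_{j∈ℕ₊} T_j whose image projects onto each factor T_j and whose image intersects the restricted direct sum ⊕_{j∈ℕ₊} T_j trivially. (That is: every countably based residually-𝒞 group admits a faithful infinitary 𝒞-residual representation.) -/

import Mathlib

namespace BranchPaper

universe u

/-- Vertices at level `n` of the rooted tree defined by the sequence of alphabets `X`: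
strings `x₁ ⋯ x_n` with `x_{i+1} ∈ X i` (we index alphabets from `0`). -/
abbrev Vertex (X : ℕ → Type u) (n : ℕ) : Type u := ∀ i : Fin n, X (i : ℕ)

/-- The shifted sequence of alphabets `𝔛.σⁿ`. -/
abbrev shift (X : ℕ → Type u) (n : ℕ) : ℕ → Type u := fun k => X (n + k)

variable {X : ℕ → Type u}

/-- Compatibility of a sequence of level permutations with truncation: this is precisely
the condition for the family to define an automorphism of the rooted tree. -/
def Compat (p : ∀ n, Equiv.Perm (Vertex X n)) : Prop :=
  ∀ (n : ℕ) (v : Vertex X (n + 1)), Fin.init (p (n + 1) v) = p n (Fin.init v)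

/-- The automorphism group of the rooted tree `T_X`, realised as the subgroup of
`∏ₙ Sym(L(n))` of families of layer permutations compatible with truncation. -/
def treeAutGroup (X : ℕ → Type u) : Subgroup (∀ n, Equiv.Perm (Vertex X n)) where
  carrier := {p | Compat p}
  one_mem' := fun _ _ => rfl
  mul_mem' := by
    intro a b ha hb n v
    show Fin.init (a (n + 1) (b (n + 1) v)) = a n (b n (Fin.init v))
    rw [ha, hb]
  inv_mem' := by
    intro a ha n v
    apply (a n).injective
    show a n (Fin.init ((a (n + 1))⁻¹ v)) = a n ((a n)⁻¹ (Fin.init v))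
    rw [← ha n ((a (n + 1))⁻¹ v), Equiv.Perm.inv_def, Equiv.Perm.inv_def, Equiv.apply_symm_apply,
      Equiv.apply_symm_apply]

/-- `Aut(T_X)`. -/
abbrev TreeAut (X : ℕ → Type u) := ↥(treeAutGroup X)

lemma mem_treeAutGroup {p : ∀ n, Equiv.Perm (Vertex X n)} : p ∈ treeAutGroup X ↔ Compat p :=
  Iff.rfl

lemma TreeAut.compat (g : TreeAut X) : Compat (g.1) := g.2

/-- The first `n` letters of a vertex of length `n + m`. -/
def front {n m : ℕ} (w : Vertex X (n + m)) : Vertex X n := fun i => w (Fin.castAdd m i)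

/-- The last `m` letters of a vertex of length `n + m`, as a vertex of the shifted tree. -/
def back {n m : ℕ} (w : Vertex X (n + m)) : Vertex (shift X n) m := fun i => w (Fin.natAdd n i)

/-- Concatenation of a vertex of `T_X` with a vertex of the shifted tree. -/
def append {n m : ℕ} (v : Vertex X n) (w : Vertex (shift X n) m) : Vertex X (n + m) :=
  Fin.addCases (motive := fun i => X (i : ℕ)) v w

@[simp] lemma front_append {n m : ℕ} (v : Vertex X n) (w : Vertex (shift X n) m) :
    front (append v w) = v := by
  funext i
  show Fin.addCases (motive := fun i => X (i : ℕ)) v w (Fin.castAdd m i) = v i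
  exact Fin.addCases_left i

@[simp] lemma back_append {n m : ℕ} (v : Vertex X n) (w : Vertex (shift X n) m) :
    back (append v w) = w := by
  funext i
  show Fin.addCases (motive := fun i => X (i : ℕ)) v w (Fin.natAdd n i) = w i
  exact Fin.addCases_right i

@[simp] lemma append_front_back {n m : ℕ} (w : Vertex X (n + m)) :
    append (front w) (back w) = w := by
  funext i
  induction i using Fin.addCases with
  | left i =>
      show Fin.addCases (motive := fun i => X (i : ℕ)) (front w) (back w) (Fin.castAdd m i)
        = w (Fin.castAdd m i)
      rw [Fin.addCases_left]
      rfl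
  | right i =>
      show Fin.addCases (motive := fun i => X (i : ℕ)) (front w) (back w) (Fin.natAdd n i)
        = w (Fin.natAdd n i)
      rw [Fin.addCases_right]
      rfl

lemma init_append {n m : ℕ} (v : Vertex X n) (w : Vertex (shift X n) (m + 1)) :
    Fin.init (n := n + m) (append (n := n) (m := m + 1) v w) = append v (Fin.init w) := by
  funext i
  induction i using Fin.addCases with
  | left i =>
      have h1 : Fin.addCases (motive := fun j => X (j : ℕ)) v w (Fin.castAdd (m + 1) i)
          = v i := Fin.addCases_left i
      have h2 : Fin.addCases (motive := fun j => X (j : ℕ)) v (Fin.init w) (Fin.castAdd m i)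
          = v i := Fin.addCases_left i
      exact h1.trans h2.symm
  | right i =>
      have h1 : Fin.addCases (motive := fun j => X (j : ℕ)) v w (Fin.natAdd n i.castSucc)
          = w i.castSucc := Fin.addCases_right i.castSucc
      have h2 : Fin.addCases (motive := fun j => X (j : ℕ)) v (Fin.init w) (Fin.natAdd n i)
          = Fin.init w i := Fin.addCases_right i
      exact h1.trans h2.symm

lemma front_act (g : TreeAut X) (n : ℕ) :
    ∀ (m : ℕ) (w : Vertex X (n + m)), front (g.1 (n + m) w) = g.1 n (front w) := by
  intro m
  induction m with
  | zero => intro w; rfl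
  | succ m ih =>
      intro w
      calc front (g.1 (n + (m + 1)) w)
          = front (m := m) (Fin.init (n := n + m) (g.1 (n + m + 1) w)) := rfl
        _ = front (m := m) (g.1 (n + m) (Fin.init (n := n + m) w)) := by
              rw [g.compat (n + m) w]
        _ = g.1 n (front (Fin.init (n := n + m) w)) := ih _
        _ = g.1 n (front w) := rfl

lemma coe_inv_apply (g : TreeAut X) (n : ℕ) (v : Vertex X n) :
    (g⁻¹).1 n v = (g.1 n)⁻¹ v := rfl

/-- The section `g|_v` of a tree automorphism at a vertex `v`, an automorphism of the
shifted tree, characterised by `g (v * w) = g v * (g|_v) w`. -/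
def sectionAt (g : TreeAut X) {n : ℕ} (v : Vertex X n) : TreeAut (shift X n) :=
  ⟨fun m =>
    { toFun := fun w => back (g.1 (n + m) (append v w))
      invFun := fun w => back ((g⁻¹).1 (n + m) (append (g.1 n v) w))
      left_inv := by
        intro w
        have hfront : front (g.1 (n + m) (append v w)) = g.1 n v := by
          rw [front_act, front_append]
        have key := append_front_back (g.1 (n + m) (append v w))
        rw [hfront] at key
        show back ((g⁻¹).1 (n + m) (append (g.1 n v) (back (g.1 (n + m) (append v w))))) = w
        rw [key]
        have h2 : (g⁻¹).1 (n + m) (g.1 (n + m) (append v w)) = append v w := by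
          show (g.1 (n + m))⁻¹ (g.1 (n + m) (append v w)) = append v w
          exact Equiv.symm_apply_apply _ _
        rw [h2, back_append]
      right_inv := by
        intro w
        have hfront : front ((g⁻¹).1 (n + m) (append (g.1 n v) w)) = v := by
          rw [front_act, front_append]
          show (g.1 n)⁻¹ (g.1 n v) = v
          exact Equiv.symm_apply_apply _ _
        have key := append_front_back ((g⁻¹).1 (n + m) (append (g.1 n v) w))
        rw [hfront] at key
        show back (g.1 (n + m) (append v (back ((g⁻¹).1 (n + m) (append (g.1 n v) w))))) = w
        rw [key]
        have h2 : g.1 (n + m) ((g⁻¹).1 (n + m) (append (g.1 n v) w)) = append (g.1 n v) w := by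
          show g.1 (n + m) ((g.1 (n + m))⁻¹ (append (g.1 n v) w)) = append (g.1 n v) w
          exact Equiv.apply_symm_apply _ _
        rw [h2, back_append] },
   by
    intro m w
    have h1 : Fin.init (n := n + m) (g.1 (n + m + 1) (append (n := n) (m := m + 1) v w))
        = g.1 (n + m) (Fin.init (n := n + m) (append (n := n) (m := m + 1) v w)) :=
      g.compat (n + m) (append (n := n) (m := m + 1) v w)
    calc Fin.init (back (n := n) (m := m + 1)
            (g.1 (n + (m + 1)) (append (n := n) (m := m + 1) v w)))
        = back (m := m) (Fin.init (n := n + m)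
            (g.1 (n + m + 1) (append (n := n) (m := m + 1) v w))) := rfl
      _ = back (m := m) (g.1 (n + m)
            (Fin.init (n := n + m) (append (n := n) (m := m + 1) v w))) := by rw [h1]
      _ = back (g.1 (n + m) (append v (Fin.init w))) := by rw [init_append v w]⟩

/-- An automorphism is finitary if all sections at some level are trivial. -/
def Finitary (g : TreeAut X) : Prop := ∃ n : ℕ, ∀ v : Vertex X n, sectionAt g v = 1

/-- `v` is a prefix of `w`. -/
def IsPrefixOf {n k : ℕ} (v : Vertex X n) (w : Vertex X k) : Prop :=
  ∃ h : n ≤ k, ∀ i : Fin n, w (Fin.castLE h i) = v i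

/-- `g` fixes every vertex which does not have `v` as a prefix. -/
def FixesOutside (g : TreeAut X) {n : ℕ} (v : Vertex X n) : Prop :=
  ∀ (k : ℕ) (w : Vertex X k), ¬ IsPrefixOf v w → g.1 k w = w

/-- A group of tree automorphisms acts spherically transitively if it acts transitively
on every layer. -/
def SphericallyTransitive (G : Subgroup (TreeAut X)) : Prop :=
  ∀ (n : ℕ) (v w : Vertex X n), ∃ g ∈ G, g.1 n v = w

/-- A group of tree automorphisms is layered if for every `g ∈ G` and every vertex `v`,
the insertion `ins_v (g|_v)` (the unique automorphism fixing everything outside the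
subtree at `v` and with section `g|_v` at `v`) again belongs to `G`. -/
def Layered (G : Subgroup (TreeAut X)) : Prop :=
  ∀ g ∈ G, ∀ (n : ℕ) (v : Vertex X n),
    ∃ h : TreeAut X, h ∈ G ∧ FixesOutside h v ∧ sectionAt h v = sectionAt g v

/-- The rigid vertex stabiliser of `v` in `G`. -/
def rist (G : Subgroup (TreeAut X)) {n : ℕ} (v : Vertex X n) : Subgroup (TreeAut X) where
  carrier := {g | g ∈ G ∧ FixesOutside g v}
  one_mem' := ⟨G.one_mem, fun _ _ _ => rfl⟩
  mul_mem' := by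
    rintro a b ⟨haG, ha⟩ ⟨hbG, hb⟩
    refine ⟨G.mul_mem haG hbG, fun k w hw => ?_⟩
    show a.1 k (b.1 k w) = w
    rw [hb k w hw, ha k w hw]
  inv_mem' := by
    rintro a ⟨haG, ha⟩
    refine ⟨G.inv_mem haG, fun k w hw => ?_⟩
    apply (a.1 k).injective
    show a.1 k ((a.1 k)⁻¹ w) = a.1 k w
    rw [Equiv.Perm.inv_def, Equiv.apply_symm_apply, ha k w hw]

/-- The rigid layer stabiliser `Rist_G(n)`, the subgroup generated by the rigid vertex
stabilisers of the vertices in layer `n`. -/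
def RistL (G : Subgroup (TreeAut X)) (n : ℕ) : Subgroup (TreeAut X) :=
  Subgroup.closure (⋃ v : Vertex X n, (rist G v : Set (TreeAut X)))

/-- A ray in the rooted tree. -/
def IsRay (u : ∀ n, Vertex X n) : Prop := ∀ n, Fin.init (u (n + 1)) = u n

/-- A `𝔲`-generalised spinal element: all sections away from the ray are finitary. -/
def GeneralisedSpinal (u : ∀ n, Vertex X n) (g : TreeAut X) : Prop :=
  ∀ (n : ℕ) (v : Vertex X n), v ≠ u n → Finitary (sectionAt g v)

section Portrait

/-- The action on layers induced by a portrait (a labelling of the vertices by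
permutations of the corresponding alphabets). -/
def portraitAct (L : ∀ n, Vertex X n → Equiv.Perm (X n)) : ∀ n, Vertex X n → Vertex X n
  | 0, v => v
  | (n + 1), v =>
      Fin.snoc (portraitAct L n (Fin.init v)) (L n (Fin.init v) (v (Fin.last n)))

lemma portraitAct_injective (L : ∀ n, Vertex X n → Equiv.Perm (X n)) :
    ∀ n, Function.Injective (portraitAct L n)
  | 0 => fun _ _ h => h
  | (n + 1) => by
      intro a b h
      simp only [portraitAct] at h
      have hinit : Fin.init a = Fin.init b := by
        apply portraitAct_injective L n
        have := congrArg Fin.init h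
        simpa [Fin.init_snoc] using this
      have hlast : a (Fin.last n) = b (Fin.last n) := by
        have h2 := congrFun h (Fin.last n)
        rw [Fin.snoc_last, Fin.snoc_last, hinit] at h2
        exact (L n (Fin.init b)).injective h2
      calc a = Fin.snoc (Fin.init a) (a (Fin.last n)) := (Fin.snoc_init_self a).symm
        _ = Fin.snoc (Fin.init b) (b (Fin.last n)) := by rw [hinit, hlast]
        _ = b := Fin.snoc_init_self b

/-- The tree automorphism determined by a portrait. -/
noncomputable def ofPortrait [∀ k, Finite (X k)] (L : ∀ n, Vertex X n → Equiv.Perm (X n)) :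
    TreeAut X :=
  ⟨fun n => Equiv.ofBijective (portraitAct L n)
      (Finite.injective_iff_bijective.mp (portraitAct_injective L n)),
   by
    intro n v
    show Fin.init (portraitAct L (n + 1) v) = portraitAct L n (Fin.init v)
    simp [portraitAct, Fin.init_snoc]⟩

end Portrait

section Construction

variable (S : ℕ → Type u)

/-- The spinal automorphism determined by a sequence `c` of group elements: it has the
rooted permutation induced by `c k` at the vertex `u_k x_{k+1}` and trivial label
everywhere else. -/
noncomputable def spinalAut [∀ k, Finite (X k)] [∀ n, Group (S n)]
    [∀ n, MulAction (S n) (X n)] (u : ∀ n, Vertex X n) (x : ∀ n, X n)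
    (c : ∀ n, S (n + 1)) : TreeAut X :=
  ofPortrait (fun n => match n with
    | 0 => fun _ => 1
    | (k + 1) => fun v =>
        haveI := Classical.propDecidable (v = Fin.snoc (u k) (x k))
        if v = Fin.snoc (u k) (x k) then MulAction.toPerm (c k) else 1)

/-- The rooted automorphism induced by an element acting on the first alphabet. -/
noncomputable def rootedAut (X : ℕ → Type u) [∀ k, Finite (X k)] {R : Type*} [Group R]
    [MulAction R (X 0)] (s : R) : TreeAut X :=
  ofPortrait (fun n => match n with
    | 0 => fun _ => MulAction.toPerm s
    | (_ + 1) => fun _ => 1)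

/-- The group `Fin_𝔖(T)` of finitary automorphisms all of whose labels lie in the images
of the groups `S n` acting on the alphabets, described as a set. -/
def finSet (X : ℕ → Type u) (S : ℕ → Type u) [∀ n, Group (S n)]
    [∀ n, MulAction (S n) (X n)] : Set (TreeAut X) :=
  {g | Finitary g ∧ ∀ (n : ℕ) (v : Vertex X n), ∃ s : S n, ∀ y : X n,
      g.1 (n + 1) (Fin.snoc v y) (Fin.last n) = s • y}

variable {G : Type u} [Group G]

/-- The branch group `Γ` of the construction. -/
noncomputable def gammaGroup [∀ k, Finite (X k)] [∀ n, Group (S n)]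
    [∀ n, MulAction (S n) (X n)] (φ : G →* ∀ n, S (n + 1))
    (u : ∀ n, Vertex X n) (x : ∀ n, X n) : Subgroup (TreeAut X) :=
  Subgroup.closure
    (Set.range (fun s : S 0 => rootedAut X s) ∪
     Set.range (fun g : G => spinalAut S u x (fun n => φ g n)))

/-- The subgroup `Δ(H) = ⟨Fin_𝔖(T) ∪ {s_h : h ∈ H}⟩`. -/
noncomputable def deltaGroup [∀ k, Finite (X k)] [∀ n, Group (S n)]
    [∀ n, MulAction (S n) (X n)] (φ : G →* ∀ n, S (n + 1))
    (u : ∀ n, Vertex X n) (x : ∀ n, X n) (H : Subgroup G) : Subgroup (TreeAut X) :=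
  Subgroup.closure
    (finSet X S ∪ ((fun g : G => spinalAut S u x (fun n => φ g n)) '' (H : Set G)))

end Construction

/-- Every countably based residually-`𝒞` group admits a faithful infinitary
`𝒞`-residual representation. -/
theorem statement2 (C : GrpCat → Prop)
    (hC : ∀ A B : GrpCat, Nonempty (↥A ≃* ↥B) → C A → C B)
    (G : Type) [Group G] (S : ℕ → GrpCat) (hS : ∀ n, C (S n))
    (φ : G →* ∀ n, ↥(S n)) (hinj : Function.Injective φ)
    (hsub : ∀ n, Function.Surjective (fun g : G => φ g n)) :
    ∃ T : ℕ → GrpCat, (∀ j, C (T j)) ∧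
      ∃ ψ : G →* ∀ j, ↥(T j), Function.Injective ψ ∧
        (∀ j, Function.Surjective (fun g : G => ψ g j)) ∧
        (∀ g : G, {j : ℕ | ψ g j ≠ 1}.Finite → ψ g = 1) := by
  refine ⟨fun j => S (Nat.unpair j).1, fun j => hS _,
    { toFun := fun g j => φ g (Nat.unpair j).1
      map_one' := by funext j; simp
      map_mul' := by intro a b; funext j; simp }, ?_, ?_, ?_⟩
  · intro a b h
    apply hinj
    funext n
    have := congrFun h (Nat.pair n 0)
    simp only [MonoidHom.coe_mk, OneHom.coe_mk] at this
    rwa [Nat.unpair_pair] at this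
  · intro j t
    obtain ⟨g, hg⟩ := hsub (Nat.unpair j).1 t
    exact ⟨g, hg⟩
  · intro g hfin
    have hg1 : g = 1 := by
      apply hinj
      rw [map_one]
      funext n
      have hinf : (Set.range (fun m => Nat.pair n m)).Infinite :=
        Set.infinite_range_of_injective (fun a b h => by
          simpa [Nat.pair_eq_pair] using h)
      obtain ⟨j, hjr, hjn⟩ := (hinf.diff hfin).nonempty
      obtain ⟨m, rfl⟩ := hjr
      have : φ g (Nat.unpair (Nat.pair n m)).1 = 1 := not_not.mp hjn
      rwa [Nat.unpair_pair] at this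
    subst hg1
    simp only [map_one]

end BranchPaper
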